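/- arXiv:1503.08690 — 2 statements merged into one kernel-verified Lean document; each statement's English description precedes it below -/
import Mathlib

section
/- (Welch bound) If {f_1,...,f_N} is a uniform (N,d) Parseval frame with N ≥ d, then M_∞(F) ≥ sqrt((N−d)/(d(N−1))), with equality if and only if F is equiangular. -/
/-!
Testing the Parseval identity on `x = f j` shows that the Gram matrix `(⟨f i, f j⟩)` has squared
Frobenius norm `∑ j, ‖f j‖² = d`. Removing the diagonal entries `‖f j‖⁴ = d²/N²` leaves
`d (N - d) / N`, spread over the `N (N - 1)` off-diagonal entries. The largest off-diagonal
modulus is at least their root mean square, which after scaling by `N / d` is the Welch bound,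
and the two agree exactly when all off-diagonal moduli are equal.
-/

open Finset

namespace Finset

variable {α : Type*} {s : Finset α} {g : α → ℝ}

theorem sqrt_sum_sq_div_card_le_sup' (hs : s.Nonempty) (hg : ∀ a ∈ s, 0 ≤ g a) :
    √((∑ a ∈ s, g a ^ 2) / #s) ≤ s.sup' hs g := by
  obtain ⟨a₀, ha₀⟩ := hs
  rw [Real.sqrt_le_left (le_sup'_of_le g ha₀ (hg a₀ ha₀)),
    div_le_iff₀ (by exact_mod_cast card_pos.2 ⟨a₀, ha₀⟩), mul_comm, ← nsmul_eq_mul]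
  exact sum_le_card_nsmul s _ _ fun a ha => pow_le_pow_left₀ (hg a ha) (le_sup' g ha) 2

theorem sqrt_sum_sq_div_card_eq_sup'_iff (hs : s.Nonempty) (hg : ∀ a ∈ s, 0 ≤ g a) :
    √((∑ a ∈ s, g a ^ 2) / #s) = s.sup' hs g ↔ ∃ c, ∀ a ∈ s, g a = c := by
  set M := s.sup' hs g
  have ⟨a₀, ha₀⟩ := hs
  have hM : 0 ≤ M := le_sup'_of_le g ha₀ (hg a₀ ha₀)
  have hcard : (0 : ℝ) < #s := by exact_mod_cast hs.card_pos
  constructor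
  · intro h
    have hgap : ∀ a ∈ s, 0 ≤ M ^ 2 - g a ^ 2 := fun a ha =>
      sub_nonneg.2 (pow_le_pow_left₀ (hg a ha) (le_sup' g ha) 2)
    have hsum : ∑ a ∈ s, (M ^ 2 - g a ^ 2) = 0 := by
      rw [Real.sqrt_eq_iff_eq_sq (by positivity) hM, div_eq_iff hcard.ne'] at h
      rw [sum_sub_distrib, sum_const, nsmul_eq_mul, h]
      ring
    refine ⟨M, fun a ha => ?_⟩
    have hsq := sub_eq_zero.1 ((sum_eq_zero_iff_of_nonneg hgap).1 hsum a ha)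
    exact (pow_left_inj₀ (hg a ha) hM two_ne_zero).1 hsq.symm
  · rintro ⟨c, hc⟩
    have hMc : M = c :=
      le_antisymm (sup'_le _ _ fun a ha => (hc a ha).le) (hc a₀ ha₀ ▸ le_sup' g ha₀)
    rw [hMc, sum_congr rfl fun a ha => by rw [hc a ha], sum_const, nsmul_eq_mul,
      mul_div_cancel_left₀ _ hcard.ne', Real.sqrt_sq (hMc ▸ hM)]

end Finset

theorem sum_offDiag_norm_inner_sq_of_parseval
    {𝕜 : Type*} [RCLike 𝕜] {H : Type*} [NormedAddCommGroup H] [InnerProductSpace 𝕜 H]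
    {ι : Type*} [Fintype ι] [DecidableEq ι] {f : ι → H}
    (hparseval : ∀ x : H, ∑ i, ‖(inner 𝕜 (f i) x : 𝕜)‖ ^ 2 = ‖x‖ ^ 2) :
    ∑ p ∈ univ.offDiag, ‖(inner 𝕜 (f p.1) (f p.2) : 𝕜)‖ ^ 2 = ∑ i, (‖f i‖ ^ 2 - ‖f i‖ ^ 4) := by
  have hall : ∑ p ∈ univ ×ˢ univ, ‖(inner 𝕜 (f p.1) (f p.2) : 𝕜)‖ ^ 2 = ∑ j, ‖f j‖ ^ 2 := by
    rw [sum_product_right]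
    exact sum_congr rfl fun j _ => hparseval (f j)
  have hdiag : ∑ p ∈ univ.diag, ‖(inner 𝕜 (f p.1) (f p.2) : 𝕜)‖ ^ 2 = ∑ i, ‖f i‖ ^ 4 := by
    refine (sum_diag _ _).trans (sum_congr rfl fun i _ => ?_)
    rw [inner_self_eq_norm_sq_to_K, norm_pow, RCLike.norm_ofReal, abs_norm, ← pow_mul]
  rw [sum_sub_distrib, ← hall, ← hdiag, ← diag_union_offDiag,
    sum_union (disjoint_diag_offDiag _), add_sub_cancel_left]

theorem welch_bound_general
    {𝕜 : Type*} [RCLike 𝕜] {H : Type*} [NormedAddCommGroup H] [InnerProductSpace 𝕜 H]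
    {N d : ℕ} (hd : 0 < d) (hdN : d ≤ N)
    (f : Fin N → H)
    (hparseval : ∀ x : H, ∑ i : Fin N, ‖(inner 𝕜 (f i) x : 𝕜)‖ ^ 2 = ‖x‖ ^ 2)
    (huniform : ∀ i, ‖f i‖ ^ 2 = (d : ℝ) / N) :
    ((N : ℝ) / d) * sSup {x : ℝ | ∃ k l : Fin N, k ≠ l ∧ x = ‖(inner 𝕜 (f k) (f l) : 𝕜)‖}
      ≥ Real.sqrt (((N : ℝ) - d) / (d * ((N : ℝ) - 1))) ∧
    (((N : ℝ) / d) * sSup {x : ℝ | ∃ k l : Fin N, k ≠ l ∧ x = ‖(inner 𝕜 (f k) (f l) : 𝕜)‖}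
        = Real.sqrt (((N : ℝ) - d) / (d * ((N : ℝ) - 1))) ↔
      ∃ c : ℝ, ∀ i j : Fin N, i ≠ j → ‖(inner 𝕜 (f i) (f j) : 𝕜)‖ = c) := by
  obtain rfl | hN : N = 1 ∨ 2 ≤ N := by omega
  · obtain rfl : d = 1 := by omega
    simp
  set g : Fin N × Fin N → ℝ := fun p => ‖(inner 𝕜 (f p.1) (f p.2) : 𝕜)‖
  set s : Finset (Fin N × Fin N) := univ.offDiag
  have hs : s.Nonempty := ⟨(⟨0, by omega⟩, ⟨1, by omega⟩), by simp [s, Fin.ext_iff]⟩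
  have hg : ∀ p ∈ s, 0 ≤ g p := fun _ _ => norm_nonneg _
  have hsup : sSup {x : ℝ | ∃ k l : Fin N, k ≠ l ∧ x = ‖(inner 𝕜 (f k) (f l) : 𝕜)‖} =
      s.sup' hs g := by
    rw [sup'_eq_csSup_image]
    congr 1
    ext x
    simp [s, g, eq_comm]
  have hsum : ∑ p ∈ s, g p ^ 2 = N * ((d : ℝ) / N - ((d : ℝ) / N) ^ 2) := by
    rw [sum_offDiag_norm_inner_sq_of_parseval hparseval]
    simp [pow_mul ‖_‖ 2 2, huniform, mul_sub]
  have hcard : (#s : ℝ) = N * (N - 1) := by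
    rw [offDiag_card, card_univ, Fintype.card_fin, Nat.cast_sub (Nat.le_mul_self N)]
    push_cast
    ring
  have hrhs : √(((N : ℝ) - d) / (d * ((N : ℝ) - 1))) = N / d * √((∑ p ∈ s, g p ^ 2) / #s) := by
    rw [hsum, hcard, ← Real.sqrt_sq (by positivity : (0 : ℝ) ≤ N / d),
      ← Real.sqrt_mul (by positivity)]
    congr 1
    field_simp
  have hequi : (∃ c : ℝ, ∀ i j : Fin N, i ≠ j → ‖(inner 𝕜 (f i) (f j) : 𝕜)‖ = c) ↔
      ∃ c, ∀ p ∈ s, g p = c := by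
    simp [s, g]
  rw [hsup, hrhs, hequi, ← sqrt_sum_sq_div_card_eq_sup'_iff hs hg, mul_right_inj' (by positivity)]
  exact ⟨mul_le_mul_of_nonneg_left (sqrt_sum_sq_div_card_le_sup' hs hg) (by positivity), eq_comm⟩

/-- (Welch bound) A uniform `(N,d)` Parseval frame `F` (each `‖f_i‖² = d/N`) satisfies
`M_∞(F) = (N/d)·max_{k≠l}‖⟨f_k,f_l⟩‖ ≥ √((N-d)/(d(N-1)))`, with equality
iff `F` is equiangular. -/
theorem welch_bound
    {𝕜 : Type*} [RCLike 𝕜] {H : Type*} [NormedAddCommGroup H] [InnerProductSpace 𝕜 H]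
    [FiniteDimensional 𝕜 H] {N d : ℕ} (hd : 0 < d) (hdN : d ≤ N)
    (hdim : Module.finrank 𝕜 H = d)
    (f : Fin N → H)
    (hparseval : ∀ x : H, ∑ i : Fin N, ‖(inner 𝕜 (f i) x : 𝕜)‖ ^ 2 = ‖x‖ ^ 2)
    (huniform : ∀ i, ‖f i‖ ^ 2 = (d : ℝ) / N) :
    ((N : ℝ) / d) * sSup {x : ℝ | ∃ k l : Fin N, k ≠ l ∧ x = ‖(inner 𝕜 (f k) (f l) : 𝕜)‖}
      ≥ Real.sqrt (((N : ℝ) - d) / (d * ((N : ℝ) - 1))) ∧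
    (((N : ℝ) / d) * sSup {x : ℝ | ∃ k l : Fin N, k ≠ l ∧ x = ‖(inner 𝕜 (f k) (f l) : 𝕜)‖}
        = Real.sqrt (((N : ℝ) - d) / (d * ((N : ℝ) - 1))) ↔
      ∃ c : ℝ, ∀ i j : Fin N, i ≠ j → ‖(inner 𝕜 (f i) (f j) : 𝕜)‖ = c) :=
  welch_bound_general hd hdN f hparseval huniform
end

section
/- Two Parseval frames {f_i} and {g_i} for H (with analysis operators V and W) satisfy g_i = U f_i for all i for some unitary U : H → H if and only if VV* = WW*, i.e., they have the same Grammian. -/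
/-!
The analysis operator `V x = (⟪f i, x⟫)ᵢ` of a Parseval frame is a linear isometry into
`ℓ²(ι)`. Since the frame spans `H`, its range is spanned by the vectors `V (f i) = (⟪f j, f i⟫)ⱼ`,
the columns of the Grammian. Equal Grammians thus give analysis operators `V`, `W` with equal
ranges and `V (f i) = W (g i)`, and `U := W⁻¹ ∘ V` is the required unitary.
-/

open scoped InnerProductSpace

theorem LinearIsometry.exists_linearIsometryEquiv_apply_eq_of_range_eq {R E F G : Type*}
    [Ring R] [NormedAddCommGroup E] [NormedAddCommGroup F] [NormedAddCommGroup G]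
    [Module R E] [Module R F] [Module R G] (V : E →ₗᵢ[R] G) (W : F →ₗᵢ[R] G)
    (h : LinearMap.range V.toLinearMap = LinearMap.range W.toLinearMap) :
    ∃ U : E ≃ₗᵢ[R] F, ∀ x, W (U x) = V x := by
  refine ⟨(V.equivRange.trans (.ofEq _ _ h)).trans W.equivRange.symm, fun x => ?_⟩
  rw [LinearIsometryEquiv.trans_apply, ← W.equivRange_apply_coe,
    LinearIsometryEquiv.apply_symm_apply]
  rfl

section ParsevalFrame

variable (𝕜 : Type*) [RCLike 𝕜] {H : Type*} [NormedAddCommGroup H] [InnerProductSpace 𝕜 H]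
  {ι : Type*}

def analysisOp (f : ι → H) : H →ₗ[𝕜] EuclideanSpace 𝕜 ι :=
  (WithLp.linearEquiv 2 𝕜 (ι → 𝕜)).symm.toLinearMap ∘ₗ LinearMap.pi fun i => innerₛₗ 𝕜 (f i)

variable [Fintype ι]

def IsParsevalFrame (f : ι → H) : Prop :=
  ∀ x : H, ∑ i, ‖(⟪f i, x⟫_𝕜)‖ ^ 2 = ‖x‖ ^ 2

namespace IsParsevalFrame

variable {𝕜} {f : ι → H}

def analysis (hf : IsParsevalFrame 𝕜 f) : H →ₗᵢ[𝕜] EuclideanSpace 𝕜 ι where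
  toLinearMap := analysisOp 𝕜 f
  norm_map' x := by
    rw [← sq_eq_sq₀ (norm_nonneg _) (norm_nonneg _), EuclideanSpace.norm_sq_eq, ← hf x]
    rfl

@[simp]
theorem analysis_apply (hf : IsParsevalFrame 𝕜 f) (x : H) (i : ι) :
    hf.analysis x i = ⟪f i, x⟫_𝕜 := rfl

theorem sum_inner_smul_eq (hf : IsParsevalFrame 𝕜 f) (x : H) : ∑ i, ⟪f i, x⟫_𝕜 • f i = x := by
  refine ext_inner_right 𝕜 fun v => ?_
  rw [← hf.analysis.inner_map_map x v, PiLp.inner_apply, sum_inner]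
  simp only [inner_smul_left, inner_conj_symm, analysis_apply, RCLike.inner_apply, mul_comm]

theorem span_eq_top (hf : IsParsevalFrame 𝕜 f) : Submodule.span 𝕜 (Set.range f) = ⊤ :=
  Submodule.eq_top_iff'.mpr fun x =>
    (Submodule.mem_span_range_iff_exists_fun 𝕜).mpr ⟨_, hf.sum_inner_smul_eq x⟩

theorem range_analysis (hf : IsParsevalFrame 𝕜 f) :
    LinearMap.range hf.analysis.toLinearMap = Submodule.span 𝕜 (Set.range (hf.analysis ∘ f)) := by
  rw [LinearMap.range_eq_map, ← hf.span_eq_top, Submodule.map_span, ← Set.range_comp]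
  rfl

end IsParsevalFrame
end ParsevalFrame

theorem typeI_equiv_iff_same_grammian_general
    {𝕜 : Type*} [RCLike 𝕜] {H : Type*} [NormedAddCommGroup H] [InnerProductSpace 𝕜 H]
    {N : ℕ} (f g : Fin N → H)
    (hf : ∀ x : H, ∑ i : Fin N, ‖(inner 𝕜 (f i) x : 𝕜)‖ ^ 2 = ‖x‖ ^ 2)
    (hg : ∀ x : H, ∑ i : Fin N, ‖(inner 𝕜 (g i) x : 𝕜)‖ ^ 2 = ‖x‖ ^ 2) :
    (∃ U : H ≃ₗᵢ[𝕜] H, ∀ i, g i = U (f i)) ↔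
      (∀ i j, (inner 𝕜 (f i) (f j) : 𝕜) = inner 𝕜 (g i) (g j)) := by
  replace hf : IsParsevalFrame 𝕜 f := hf
  replace hg : IsParsevalFrame 𝕜 g := hg
  constructor
  · rintro ⟨U, hU⟩ i j
    rw [hU, hU, U.inner_map_map]
  · intro hgram
    have hVfg : hf.analysis ∘ f = hg.analysis ∘ g := by
      ext i j
      exact hgram j i
    obtain ⟨U, hU⟩ := hf.analysis.exists_linearIsometryEquiv_apply_eq_of_range_eq hg.analysis
      (by rw [hf.range_analysis, hg.range_analysis, hVfg])
    exact ⟨U, fun i => hg.analysis.injective (by rw [hU]; exact congrFun hVfg.symm i)⟩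

/-- Two Parseval frames are related by a unitary (`g i = U f i` for all `i`)
if and only if they have the same Grammian. -/
theorem typeI_equiv_iff_same_grammian
    {𝕜 : Type*} [RCLike 𝕜] {H : Type*} [NormedAddCommGroup H] [InnerProductSpace 𝕜 H]
    [FiniteDimensional 𝕜 H] {N : ℕ} (f g : Fin N → H)
    (hf : ∀ x : H, ∑ i : Fin N, ‖(inner 𝕜 (f i) x : 𝕜)‖ ^ 2 = ‖x‖ ^ 2)
    (hg : ∀ x : H, ∑ i : Fin N, ‖(inner 𝕜 (g i) x : 𝕜)‖ ^ 2 = ‖x‖ ^ 2) :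
    (∃ U : H ≃ₗᵢ[𝕜] H, ∀ i, g i = U (f i)) ↔
      (∀ i j, (inner 𝕜 (f i) (f j) : 𝕜) = inner 𝕜 (g i) (g j)) :=
  typeI_equiv_iff_same_grammian_general f g hf hg
end
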